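/- Let I be a closed interval of ℝ⁺ and H : I × ℝⁿ × ℝⁿ → ℝ with t ↦ H(t,x,p) measurable for all x,p. Assume (H.1.1) p ↦ H(t,x,p) is convex for all t ∈ I, x ∈ ℝⁿ; (H.1.2) for all r > 0 there exists a measurable C_r : I → ℝ⁺ with |H(t,x,p) − H(t,y,p)| ≤ C_r(t)(1+|p|)|x−y| for all t ∈ I, x,y ∈ B(0,r), p ∈ ℝⁿ; and (H.1.4) for all (t,x) ∈ I × ℝⁿ and all q̄ ∈ cl D(t,x) there exists ε > 0 with sup{H*(t,x,q) : q ∈ D(t,x) ∩ B(q̄,ε)} < +∞. Then: (i) D(t,x) := dom H*(t,x,·) is a nonempty closed convex subset of ℝⁿ for every (t,x); (ii) for all t ∈ I and r > 0, D(t,x) ⊂ D(t,y) + C_r(t)|x−y| B for all x,y ∈ B(0,r). -/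

import Mathlib

/-!
A finite convex function on `ℝⁿ` lies above some affine function `⟪q, ·⟫ - b` (Hahn–Banach
applied to its epigraph), and this says exactly that `q ∈ D`. The set `D` is convex because `H*`
is, and closed because `H*` is lower semicontinuous and, by (H.1.4), bounded near every point of
`cl D`. For (ii), if `⟪q, p⟫ - H(t,x,p) ≤ M` for all `p`, then (H.1.2) puts the concave function
`⟪q, p⟫ - c|p| - (M + c)`, `c = C_r(t)|x - y|`, below `H(t,y,·)`. An affine function
`⟪q', p⟫ - b` squeezed between the two gives `q' ∈ D(t,y)`, and `⟪q - q', p⟫ ≤ K + c|p|` for all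
`p` forces `|q - q'| ≤ c`.
-/

open Set Metric Pointwise

noncomputable section

abbrev En (n : ℕ) := EuclideanSpace ℝ (Fin n)

/-- The Fenchel transform (conjugate) of `g`, as an extended-real-valued function. -/
noncomputable def fenchel {n : ℕ} (g : En n → ℝ) (q : En n) : EReal :=
  ⨆ p : En n, (((inner ℝ q p : ℝ) - g p : ℝ) : EReal)

/-- The domain of the Fenchel transform of `g`. -/
def fdom {n : ℕ} (g : En n → ℝ) : Set (En n) := {q | fenchel g q < ⊤}

theorem ConvexOn.exists_affine_separating {E : Type*} [TopologicalSpace E] [AddCommGroup E]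
    [Module ℝ E] [IsTopologicalAddGroup E] [ContinuousSMul ℝ E] {h : E → ℝ}
    (hh : ConvexOn ℝ univ h) {S : Set (E × ℝ)} (hSo : IsOpen S) (hSc : Convex ℝ S)
    (hS : S.Nonempty) (hSh : ∀ z ∈ S, z.2 < h z.1) :
    ∃ (φ : StrongDual ℝ E) (b : ℝ), (∀ p, φ p - h p ≤ b) ∧ ∀ z ∈ S, z.2 < φ z.1 - b := by
  have hdisj : Disjoint S {z : E × ℝ | z.1 ∈ univ ∧ h z.1 ≤ z.2} :=
    disjoint_left.2 fun z hzS hzT => (hSh z hzS).not_ge hzT.2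
  obtain ⟨f, u, hfS, hfT⟩ := geometric_hahn_banach_open hSc hSo hh.convex_epigraph hdisj
  have hf : ∀ z : E × ℝ, f z = f (z.1, 0) + z.2 * f (0, 1) := fun z => by
    conv_lhs => rw [show z = (z.1, 0) + z.2 • ((0 : E), (1 : ℝ)) by ext <;> simp]
    rw [map_add, map_smul, smul_eq_mul]
  set α := f (0, 1)
  have hf_graph : ∀ p, u ≤ f (p, 0) + h p * α := fun p => by
    simpa only [hf (p, h p)] using hfT (p, h p) ⟨mem_univ p, le_rfl⟩
  -- `S` lies strictly below the graph, so the separating functional increases upwards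
  have hα : 0 < α := by
    obtain ⟨z, hz⟩ := hS
    have hfz := hfS z hz
    rw [hf z] at hfz
    have : 0 < (h z.1 - z.2) * α := by linarith [hf_graph z.1]
    exact pos_of_mul_pos_right this (sub_pos.2 (hSh z hz)).le
  refine ⟨-α⁻¹ • f.comp (ContinuousLinearMap.inl ℝ E ℝ), -(u / α), fun p => ?_, fun z hz => ?_⟩
  · have := hf_graph p
    simp only [smul_apply, ContinuousLinearMap.comp_apply,
      ContinuousLinearMap.inl_apply, smul_eq_mul]
    field_simp
    linarith
  · have := hfS z hz
    rw [hf z] at this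
    simp only [smul_apply, ContinuousLinearMap.comp_apply,
      ContinuousLinearMap.inl_apply, smul_eq_mul]
    field_simp
    linarith

theorem ConvexOn.exists_affine_le {E : Type*} [NormedAddCommGroup E] [NormedSpace ℝ E]
    {h : E → ℝ} (hh : ConvexOn ℝ univ h) {p₀ : E} (hc : ContinuousAt h p₀) :
    ∃ (φ : StrongDual ℝ E) (b : ℝ), ∀ p, φ p - h p ≤ b := by
  obtain ⟨δ, hδ, hball⟩ :=
    Metric.mem_nhds_iff.1 (hc.eventually (lt_mem_nhds (sub_one_lt (h p₀))))
  obtain ⟨φ, b, hφ, -⟩ := hh.exists_affine_separating (isOpen_ball.prod isOpen_Iio)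
    ((convex_ball p₀ δ).prod (convex_Iio _))
    ⟨(p₀, h p₀ - 2), mem_ball_self hδ, show h p₀ - 2 < h p₀ - 1 by linarith⟩
    fun z hz => hz.2.trans (hball hz.1)
  exact ⟨φ, b, hφ⟩

theorem norm_le_of_forall_inner_le {E : Type*} [NormedAddCommGroup E] [InnerProductSpace ℝ E]
    {v : E} {c K : ℝ} (hc : 0 ≤ c) (h : ∀ p, inner ℝ v p ≤ K + c * ‖p‖) : ‖v‖ ≤ c := by
  by_contra! hvc
  have hd : 0 < ‖v‖ * (‖v‖ - c) := mul_pos (hc.trans_lt hvc) (sub_pos.2 hvc)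
  have key : ∀ t > 0, t * (‖v‖ * (‖v‖ - c)) ≤ K := fun t ht => by
    have := h (t • v)
    rw [real_inner_smul_right, real_inner_self_eq_norm_sq, norm_smul, Real.norm_of_nonneg ht.le]
      at this
    linarith
  have := key ((|K| + 1) / (‖v‖ * (‖v‖ - c))) (by positivity)
  rw [div_mul_cancel₀ _ hd.ne'] at this
  linarith [le_abs_self K]

theorem LowerSemicontinuous.isClosed_setOf_lt_top {X : Type*} [PseudoMetricSpace X]
    {f : X → EReal} (hf : LowerSemicontinuous f)
    (hbdd : ∀ x ∈ closure {y | f y < ⊤}, ∃ ε > (0 : ℝ), ∃ M : ℝ,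
      ∀ y ∈ {y | f y < ⊤} ∩ closedBall x ε, f y ≤ M) :
    IsClosed {y | f y < ⊤} := by
  refine closure_subset_iff_isClosed.1 fun x hx => ?_
  obtain ⟨ε, hε, M, hM⟩ := hbdd x hx
  by_contra hxtop
  rw [mem_ofPred_eq, not_lt_top_iff] at hxtop
  have hfx : (M : EReal) < f x := hxtop ▸ EReal.coe_lt_top M
  obtain ⟨y, hyM, hy⟩ :=
    mem_closure_iff_nhds.1 hx _ (Filter.inter_mem (hf x M hfx) (closedBall_mem_nhds x hε))
  exact hyM.1.not_ge (hM y ⟨hy, hyM.2⟩)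

section FenchelDomain

variable {n : ℕ}

theorem mem_fdom_iff {g : En n → ℝ} {q : En n} :
    q ∈ fdom g ↔ ∃ M : ℝ, ∀ p, inner ℝ q p - g p ≤ M := by
  refine ⟨fun hq => ?_, fun ⟨M, hM⟩ => ?_⟩
  · obtain ⟨M, hM, -⟩ := EReal.lt_iff_exists_real_btwn.1 hq
    exact ⟨M, fun p => EReal.coe_le_coe_iff.1 ((le_iSup _ p).trans hM.le)⟩
  · exact (iSup_le fun p => EReal.coe_le_coe_iff.2 (hM p)).trans_lt (EReal.coe_lt_top M)

theorem fdom_nonempty {g : En n → ℝ} (hg : ConvexOn ℝ univ g) : (fdom g).Nonempty := by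
  obtain ⟨φ, b, hφ⟩ :=
    hg.exists_affine_le ((hg.continuousOn isOpen_univ).continuousAt (x := 0) Filter.univ_mem)
  refine ⟨(InnerProductSpace.toDual ℝ (En n)).symm φ, mem_fdom_iff.2 ⟨b, fun p => ?_⟩⟩
  rw [InnerProductSpace.toDual_symm_apply]
  exact hφ p

theorem convex_fdom (g : En n → ℝ) : Convex ℝ (fdom g) := by
  intro q₁ hq₁ q₂ hq₂ a b ha hb hab
  obtain ⟨M₁, hM₁⟩ := mem_fdom_iff.1 hq₁
  obtain ⟨M₂, hM₂⟩ := mem_fdom_iff.1 hq₂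
  refine mem_fdom_iff.2 ⟨a * M₁ + b * M₂, fun p => ?_⟩
  rw [inner_add_left, real_inner_smul_left, real_inner_smul_left]
  linear_combination mul_le_mul_of_nonneg_left (hM₁ p) ha +
    mul_le_mul_of_nonneg_left (hM₂ p) hb + g p * hab

theorem lowerSemicontinuous_fenchel (g : En n → ℝ) : LowerSemicontinuous (fenchel g) :=
  lowerSemicontinuous_iSup fun _ => Continuous.lowerSemicontinuous <|
    continuous_coe_real_ereal.comp ((continuous_id.inner continuous_const).sub continuous_const)

theorem fdom_subset_add_closedBall {g h : En n → ℝ} (hh : ConvexOn ℝ univ h) {c : ℝ}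
    (hc : 0 ≤ c) (hgh : ∀ p, g p - h p ≤ c * (1 + ‖p‖)) :
    fdom g ⊆ fdom h + closedBall 0 c := by
  intro q hq
  obtain ⟨M, hM⟩ := mem_fdom_iff.1 hq
  set ℓ : En n → ℝ := fun p => inner ℝ q p - c * ‖p‖ - (M + c)
  have hℓh : ∀ p, ℓ p ≤ h p := fun p => by linarith [hM p, hgh p]
  have hℓ : ConcaveOn ℝ univ ℓ :=
    (((innerSL ℝ q).toLinearMap.concaveOn convex_univ).sub
      ((convexOn_norm convex_univ).smul hc)).sub (convexOn_const _ convex_univ)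
  have hℓc : Continuous ℓ := by fun_prop
  obtain ⟨φ, b, hφ, hφℓ⟩ := hh.exists_affine_separating (S := {z | z.1 ∈ univ ∧ z.2 < ℓ z.1})
    (by simpa using isOpen_lt continuous_snd (hℓc.comp continuous_fst))
    hℓ.convex_strict_hypograph ⟨(0, ℓ 0 - 1), mem_univ _, sub_one_lt _⟩
    fun z hz => hz.2.trans_le (hℓh z.1)
  set q' := (InnerProductSpace.toDual ℝ (En n)).symm φ
  have hq' : ∀ p, inner ℝ q' p = φ p := fun p => InnerProductSpace.toDual_symm_apply
  have hℓφ : ∀ p, ℓ p ≤ φ p - b := fun p =>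
    le_of_forall_lt fun s hs => hφℓ (p, s) ⟨mem_univ p, hs⟩
  have hqq' : ‖q - q'‖ ≤ c := norm_le_of_forall_inner_le (K := M + c - b) hc fun p => by
    rw [inner_sub_left, hq']
    linarith [hℓφ p]
  exact ⟨q', mem_fdom_iff.2 ⟨b, fun p => (hq' p).symm ▸ hφ p⟩, q - q',
    mem_closedBall_zero_iff.2 hqq', add_sub_cancel q' q⟩

end FenchelDomain

theorem stmt_5_general {n : ℕ} (I : Set ℝ)
    (H : ℝ → En n → En n → ℝ)
    -- (H.1.1)
    (h11 : ∀ t ∈ I, ∀ x, ConvexOn ℝ univ (H t x))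
    -- (H.1.2), with the Lipschitz modulus `C r` for the ball of radius `r`
    (C : ℝ → ℝ → ℝ)
    (hC0 : ∀ r > (0 : ℝ), ∀ t ∈ I, 0 ≤ C r t)
    (h12 : ∀ r > (0 : ℝ), ∀ t ∈ I, ∀ p : En n, ∀ x ∈ closedBall (0 : En n) r,
      ∀ y ∈ closedBall (0 : En n) r, |H t x p - H t y p| ≤ C r t * (1 + ‖p‖) * ‖x - y‖)
    -- (H.1.4)
    (h14 : ∀ t ∈ I, ∀ x : En n, ∀ qb ∈ closure (fdom (H t x)), ∃ ε > (0 : ℝ), ∃ M : ℝ,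
      ∀ q ∈ fdom (H t x) ∩ closedBall qb ε, fenchel (H t x) q ≤ (M : EReal)) :
    (∀ t ∈ I, ∀ x : En n,
      (fdom (H t x)).Nonempty ∧ IsClosed (fdom (H t x)) ∧ Convex ℝ (fdom (H t x))) ∧
    (∀ t ∈ I, ∀ r > (0 : ℝ), ∀ x ∈ closedBall (0 : En n) r, ∀ y ∈ closedBall (0 : En n) r,
      fdom (H t x) ⊆ fdom (H t y) + closedBall 0 (C r t * ‖x - y‖)) := by
  refine ⟨fun t ht x => ⟨fdom_nonempty (h11 t ht x),
    (lowerSemicontinuous_fenchel _).isClosed_setOf_lt_top (h14 t ht x), convex_fdom _⟩, ?_⟩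
  intro t ht r hr x hx y hy
  refine fdom_subset_add_closedBall (h11 t ht y) (mul_nonneg (hC0 r hr t ht) (norm_nonneg _))
    fun p => ?_
  calc H t x p - H t y p ≤ |H t x p - H t y p| := le_abs_self _
    _ ≤ C r t * (1 + ‖p‖) * ‖x - y‖ := h12 r hr t ht p x hx y hy
    _ = C r t * ‖x - y‖ * (1 + ‖p‖) := by ring

/-- Under (H.1.1), (H.1.2) and (H.1.4): (i) `D(t,x)` is a nonempty closed convex subset
of `ℝⁿ`; (ii) `D(t,x) ⊂ D(t,y) + C_r(t)|x−y|B` for `x, y ∈ B(0,r)`. -/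
theorem stmt_5 {n : ℕ} (I : Set ℝ) (hI : I ⊆ Ici 0) (hIcl : IsClosed I)
    (hIoc : I.OrdConnected)
    (H : ℝ → En n → En n → ℝ)
    (hHmeas : ∀ x p, Measurable fun t : I => H t.1 x p)
    -- (H.1.1)
    (h11 : ∀ t ∈ I, ∀ x, ConvexOn ℝ univ (H t x))
    -- (H.1.2), with the Lipschitz modulus `C r` for the ball of radius `r`
    (C : ℝ → ℝ → ℝ)
    (hCmeas : ∀ r > (0 : ℝ), Measurable fun t : I => C r t.1)
    (hC0 : ∀ r > (0 : ℝ), ∀ t ∈ I, 0 ≤ C r t)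
    (h12 : ∀ r > (0 : ℝ), ∀ t ∈ I, ∀ p : En n, ∀ x ∈ closedBall (0 : En n) r,
      ∀ y ∈ closedBall (0 : En n) r, |H t x p - H t y p| ≤ C r t * (1 + ‖p‖) * ‖x - y‖)
    -- (H.1.4)
    (h14 : ∀ t ∈ I, ∀ x : En n, ∀ qb ∈ closure (fdom (H t x)), ∃ ε > (0 : ℝ), ∃ M : ℝ,
      ∀ q ∈ fdom (H t x) ∩ closedBall qb ε, fenchel (H t x) q ≤ (M : EReal)) :
    (∀ t ∈ I, ∀ x : En n,
      (fdom (H t x)).Nonempty ∧ IsClosed (fdom (H t x)) ∧ Convex ℝ (fdom (H t x))) ∧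
    (∀ t ∈ I, ∀ r > (0 : ℝ), ∀ x ∈ closedBall (0 : En n) r, ∀ y ∈ closedBall (0 : En n) r,
      fdom (H t x) ⊆ fdom (H t y) + closedBall 0 (C r t * ‖x - y‖)) :=
  stmt_5_general I H h11 C hC0 h12 h14
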